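/- The set of N-tuples (v_1, ..., v_N) of vectors in ℝ^n forming a d-decisive set is open and dense in (ℝ^n)^N, where N = C(n+d-1, d). -/

import Mathlib

/-!
Expanding a degree-`d` homogeneous polynomial in the monomial basis, a tuple is decisive exactly
when the square matrix of the values of the degree-`d` monomials at its points is invertible.
The determinant of that matrix is a polynomial in the coordinates of the tuple, so the decisive
tuples are the non-zeros of a real polynomial: an open set, and a dense one as soon as the
polynomial is nonzero, because on the line through any point and a non-zero the polynomial has
only finitely many roots. It is nonzero because the monomials are linearly independent as
functions, so some choice of points makes their evaluation vectors a basis.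
-/

open MvPolynomial Set Finset

/-- A tuple `v : Fin N → ℝ^n` with `N = C(n+d-1,d)` is `d`-decisive if the only
homogeneous polynomial of degree `d` vanishing at all the `v i` is the zero polynomial
(equivalently, the evaluation map on degree-`d` homogeneous polynomials is injective). -/
def IsDecisive (n d : ℕ) (v : Fin ((n + d - 1).choose d) → (Fin n → ℝ)) : Prop :=
  ∀ P ∈ MvPolynomial.homogeneousSubmodule (Fin n) ℝ d,
    (∀ i, MvPolynomial.eval (v i) P = 0) → P = 0

theorem LinearIndependent.span_range_swap_eq_top {ι X K : Type*} [Fintype ι] [Field K]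
    {f : ι → X → K} (hf : LinearIndependent K f) :
    Submodule.span K (range (Function.swap f)) = ⊤ := by
  by_contra h
  obtain ⟨φ, hφ0, hφ⟩ :=
    Submodule.exists_dual_map_eq_bot_of_lt_top (lt_top_iff_ne_top.2 h) inferInstance
  have hφ_swap (x : X) : φ (Function.swap f x) = 0 := by
    have := Submodule.mem_map_of_mem (f := φ)
      (Submodule.subset_span (mem_range_self (f := Function.swap f) x))
    rwa [hφ, Submodule.mem_bot] at this
  classical
  let c : ι → K := fun j => φ fun k => if j = k then 1 else 0
  have hc : ∀ j, c j = 0 := by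
    refine Fintype.linearIndependent_iff.1 hf c (funext fun x => ?_)
    rw [Pi.zero_apply, ← hφ_swap x, LinearMap.pi_apply_eq_sum_univ φ]
    simp [c, mul_comm]
  simp only [c] at hc
  exact hφ0 (LinearMap.ext fun y => by simp [LinearMap.pi_apply_eq_sum_univ φ y, hc])

theorem LinearIndependent.exists_det_ne_zero {ι X K : Type*} [Fintype ι] [DecidableEq ι]
    [Field K] {f : ι → X → K} (hf : LinearIndependent K f) :
    ∃ x : ι → X, (Matrix.of fun i j => f j (x i)).det ≠ 0 := by
  obtain ⟨κ, a, -, hspan, hli⟩ := exists_linearIndependent' K (Function.swap f)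
  rw [hf.span_range_swap_eq_top] at hspan
  let e : ι ≃ κ := (Pi.basisFun K ι).indexEquiv (Module.Basis.mk hli hspan.ge)
  refine ⟨a ∘ e, ?_⟩
  rw [← isUnit_iff_ne_zero, ← Matrix.isUnit_iff_isUnit_det,
    ← Matrix.linearIndependent_rows_iff_isUnit]
  exact hli.comp e e.injective

theorem Fintype.card_finsuppAntidiag_univ {σ : Type*} [DecidableEq σ] [Fintype σ] (d : ℕ) :
    Fintype.card ((univ : Finset σ).finsuppAntidiag d) = (Fintype.card σ + d - 1).choose d := by
  rw [Fintype.card_coe, card_finsuppAntidiag_nat_eq_choose, card_univ]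

namespace MvPolynomial

theorem dense_setOf_eval_ne_zero {σ : Type*} {p : MvPolynomial σ ℝ} (hp : p ≠ 0) :
    Dense {x : σ → ℝ | eval x p ≠ 0} := by
  obtain ⟨w, hw⟩ : ∃ w, eval w p ≠ 0 := by
    by_contra! h
    exact hp (MvPolynomial.funext fun x => by simpa using h x)
  intro u
  let line : ℝ → σ → ℝ := fun t => u + t • (w - u)
  let q : Polynomial ℝ :=
    aeval (fun i => Polynomial.C (u i) + Polynomial.X * Polynomial.C (w i - u i)) p
  have eval_q (t : ℝ) : q.eval t = eval (line t) p := by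
    rw [← Polynomial.coe_aeval_eq_eval, ← AlgHom.comp_apply, comp_aeval]
    change aeval _ p = aeval (line t) p
    congr 2 with i
    simp [line]
  have hq : q ≠ 0 := fun h => hw (by simpa [h, line] using (eval_q 1).symm)
  have hroots : Dense {t | q.eval t ≠ 0} :=
    (Polynomial.finite_setOfPred_isRoot hq).countable.dense_compl ℝ
  have hline : Continuous line := by fun_prop
  have : line 0 ∈ closure (line '' {t | q.eval t ≠ 0}) :=
    image_closure_subset_closure_image hline ⟨0, hroots 0, rfl⟩
  simp only [line, zero_smul, add_zero] at this
  refine closure_mono ?_ this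
  rintro - ⟨t, ht, rfl⟩
  simpa [← eval_q, line] using ht

section Homogeneous

variable {σ : Type*} [DecidableEq σ] [Fintype σ] (d : ℕ) (R : Type*) [CommSemiring R]

theorem span_monomial_finsuppAntidiag_univ :
    Submodule.span R (range fun s : (univ : Finset σ).finsuppAntidiag d =>
      monomial (s : σ →₀ ℕ) (1 : R)) = homogeneousSubmodule σ R d := by
  rw [homogeneousSubmodule_eq_finsupp_supported, AddMonoidAlgebra.supported_eq_span_single]
  congr 1
  ext P
  simp [single_eq_monomial, Finsupp.degree_eq_sum]

theorem linearIndependent_monomial_finsuppAntidiag_univ :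
    LinearIndependent R fun s : (univ : Finset σ).finsuppAntidiag d =>
      monomial (s : σ →₀ ℕ) (1 : R) := by
  have := (basisMonomials σ R).linearIndependent.comp
    (Subtype.val : (univ : Finset σ).finsuppAntidiag d → σ →₀ ℕ) Subtype.val_injective
  rwa [coe_basisMonomials] at this

end Homogeneous

end MvPolynomial

section MonomialEvalMatrix

variable {σ ι R : Type*} [DecidableEq σ] [Fintype σ] {d : ℕ}

noncomputable def monomialEvalMatrix [CommSemiring R]
    (e : ι ≃ (univ : Finset σ).finsuppAntidiag d) (v : ι → σ → R) : Matrix ι ι R :=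
  Matrix.of fun i j => eval (v i) (monomial (e j : σ →₀ ℕ) 1)

variable [Fintype ι] [DecidableEq ι]

theorem det_monomialEvalMatrix_ne_zero_iff [CommRing R] [IsDomain R]
    (e : ι ≃ (univ : Finset σ).finsuppAntidiag d) (v : ι → σ → R) :
    (monomialEvalMatrix e v).det ≠ 0 ↔
      ∀ P ∈ homogeneousSubmodule σ R d, (∀ i, eval (v i) P = 0) → P = 0 := by
  have hspan : homogeneousSubmodule σ R d =
      Submodule.span R (range fun j => monomial (e j : σ →₀ ℕ) (1 : R)) := by
    rw [← span_monomial_finsuppAntidiag_univ, ← EquivLike.range_comp _ e]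
    rfl
  have hli := Fintype.linearIndependent_iff.1
    ((linearIndependent_monomial_finsuppAntidiag_univ d R).comp e e.injective)
  have hcomb_eq_zero (c : ι → R) : ∑ j, c j • monomial (e j : σ →₀ ℕ) (1 : R) = 0 ↔ c = 0 :=
    ⟨fun h => _root_.funext (hli c h), fun h => by simp [h]⟩
  have hmulVec_eq_zero (c : ι → R) : (monomialEvalMatrix e v).mulVec c = 0 ↔
      ∀ i, eval (v i) (∑ j, c j • monomial (e j : σ →₀ ℕ) 1) = 0 := by
    simp [funext_iff, monomialEvalMatrix, Matrix.mulVec, dotProduct, mul_comm]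
  rw [hspan, ne_eq, ← Matrix.exists_mulVec_eq_zero_iff]
  simp only [Submodule.mem_span_range_iff_exists_fun, forall_exists_index,
    forall_apply_eq_imp_iff, hcomb_eq_zero, hmulVec_eq_zero, not_exists, not_and]
  exact forall_congr' fun _ => not_imp_not

theorem exists_det_monomialEvalMatrix_ne_zero [Field R] [Infinite R]
    (e : ι ≃ (univ : Finset σ).finsuppAntidiag d) :
    ∃ v : ι → σ → R, (monomialEvalMatrix e v).det ≠ 0 := by
  have hmon := Fintype.linearIndependent_iff.1
    ((linearIndependent_monomial_finsuppAntidiag_univ d R).comp e e.injective)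
  have hli : LinearIndependent R fun j (x : σ → R) => eval x (monomial (e j : σ →₀ ℕ) 1) := by
    refine Fintype.linearIndependent_iff.2 fun g hg => hmon g (MvPolynomial.funext fun x => ?_)
    simpa using congrFun hg x
  exact hli.exists_det_ne_zero

noncomputable def monomialEvalDet [CommRing R] (e : ι ≃ (univ : Finset σ).finsuppAntidiag d) :
    MvPolynomial (ι × σ) R :=
  (monomialEvalMatrix e fun i k => X (i, k)).det

theorem eval_monomialEvalDet [CommRing R] (e : ι ≃ (univ : Finset σ).finsuppAntidiag d)
    (x : ι × σ → R) :
    eval x (monomialEvalDet e) = (monomialEvalMatrix e (Function.curry x)).det := by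
  rw [monomialEvalDet, RingHom.map_det]
  congr 1
  ext i j
  simp [monomialEvalMatrix, eval_monomial]

end MonomialEvalMatrix

theorem decisive_tuples_open_dense_general (n d : ℕ) :
    IsOpen {v : Fin ((n + d - 1).choose d) → (Fin n → ℝ) | IsDecisive n d v} ∧
    Dense {v : Fin ((n + d - 1).choose d) → (Fin n → ℝ) | IsDecisive n d v} := by
  let e : Fin ((n + d - 1).choose d) ≃ (univ : Finset (Fin n)).finsuppAntidiag d :=
    (Fintype.equivFinOfCardEq
      (by simpa using Fintype.card_finsuppAntidiag_univ (σ := Fin n) d)).symm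
  have hdecisive : {v | IsDecisive n d v} =
      Homeomorph.piCurry.symm ⁻¹' {x | eval x (monomialEvalDet e) ≠ 0} := by
    ext v
    change IsDecisive n d v ↔ eval (Function.uncurry v) (monomialEvalDet e) ≠ 0
    rw [eval_monomialEvalDet, det_monomialEvalMatrix_ne_zero_iff]
    rfl
  have hdet : (monomialEvalDet e : MvPolynomial _ ℝ) ≠ 0 := by
    obtain ⟨v, hv⟩ := exists_det_monomialEvalMatrix_ne_zero (R := ℝ) e
    intro h
    have := eval_monomialEvalDet e (Function.uncurry v)
    rw [h, map_zero] at this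
    exact hv this.symm
  rw [hdecisive]
  exact ⟨(isOpen_ne_fun (continuous_eval _) continuous_const).preimage (Homeomorph.continuous _),
    (dense_setOf_eval_ne_zero hdet).preimage (Homeomorph.isOpenMap _)⟩

/-- The set of `d`-decisive tuples of vectors in `ℝ^n` is open and dense in `(ℝ^n)^N`,
where `N = C(n+d-1,d)`. -/
theorem decisive_tuples_open_dense (n d : ℕ) (hn : 1 ≤ n) :
    IsOpen {v : Fin ((n + d - 1).choose d) → (Fin n → ℝ) | IsDecisive n d v} ∧
    Dense {v : Fin ((n + d - 1).choose d) → (Fin n → ℝ) | IsDecisive n d v} :=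
  decisive_tuples_open_dense_general n d
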